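/- arXiv:1911.06703 — 2 statements merged into one kernel-verified Lean document; each statement's English description precedes it below -/
import Mathlib

section
/- With R₀ = Ω₁ + εΩ₂Γ₁ + δΩ₃Γ₁Γ₂ as above, if R₀ ≤ 1 then the only nonnegative solution of the equilibrium system i₁(0) = (S/P)(i₁(0)Ω₁ + εi₂(0)Ω₂ + δi₃(0)Ω₃), i₂(0) = Γ₁i₁(0), i₃(0) = Γ₂i₂(0), i₁(0) = Λ − μS, P = S + ∑_j D̄_j i_j(0) with S, P > 0 is the disease-free solution i₁(0) = i₂(0) = i₃(0) = 0, S = Λ/μ. -/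
/-- When `R₀ ≤ 1`, the only nonnegative equilibrium with `S, P > 0` is the
disease-free equilibrium `i₁ = i₂ = i₃ = 0`, `S = Λ/μ`. -/
theorem disease_free_only_equilibrium
    (Λ μ ε δ Ω₁ Ω₂ Ω₃ Γ₁ Γ₂ D₁ D₂ D₃ : ℝ)
    (hΛ : 0 < Λ) (hμ : 0 < μ) (hε : 0 ≤ ε) (hδ : 0 ≤ δ)
    (hΩ₁ : 0 ≤ Ω₁) (hΩ₂ : 0 ≤ Ω₂) (hΩ₃ : 0 ≤ Ω₃)
    (hΓ₁ : 0 ≤ Γ₁) (hΓ₂ : 0 ≤ Γ₂)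
    (hD₁ : 0 < D₁) (hD₂ : 0 < D₂) (hD₃ : 0 < D₃)
    (R₀ : ℝ) (hR₀ : R₀ = Ω₁ + ε * Ω₂ * Γ₁ + δ * Ω₃ * Γ₁ * Γ₂) (hR₀le : R₀ ≤ 1) :
    ∀ S P i₁ i₂ i₃ : ℝ,
      0 < S → 0 < P → 0 ≤ i₁ → 0 ≤ i₂ → 0 ≤ i₃ →
      i₁ = S / P * (i₁ * Ω₁ + ε * i₂ * Ω₂ + δ * i₃ * Ω₃) →
      i₂ = Γ₁ * i₁ →
      i₃ = Γ₂ * i₂ →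
      i₁ = Λ - μ * S →
      P = S + D₁ * i₁ + D₂ * i₂ + D₃ * i₃ →
      i₁ = 0 ∧ i₂ = 0 ∧ i₃ = 0 ∧ S = Λ / μ := by
  intro S P i₁ i₂ i₃ hS hP h1 h2 h3 heq h21 h32 hSΛ hPdef
  have hi1 : i₁ = 0 := by
    by_contra h
    have hi1pos : 0 < i₁ := lt_of_le_of_ne h1 (Ne.symm h)
    have hSP : S < P := by
      have : 0 ≤ D₂ * i₂ := mul_nonneg hD₂.le h2
      have : 0 ≤ D₃ * i₃ := mul_nonneg hD₃.le h3
      nlinarith [mul_pos hD₁ hi1pos]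
    have hratio : S / P < 1 := (div_lt_one hP).mpr hSP
    have heq' : i₁ = S / P * (i₁ * R₀) := by
      subst hR₀; rw [h32, h21] at heq; linear_combination heq
    have hR0pos : 0 < R₀ := by
      by_contra hc
      push_neg at hc
      have : i₁ * R₀ ≤ 0 := mul_nonpos_of_nonneg_of_nonpos h1 hc
      have hSPpos : 0 < S / P := div_pos hS hP
      nlinarith
    have h4 : S / P * (i₁ * R₀) < 1 * (i₁ * R₀) :=
      mul_lt_mul_of_pos_right hratio (mul_pos hi1pos hR0pos)
    nlinarith [mul_nonneg h1 (sub_nonneg.mpr hR₀le)]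
  have hi2 : i₂ = 0 := by rw [h21, hi1, mul_zero]
  have hi3 : i₃ = 0 := by rw [h32, hi2, mul_zero]
  refine ⟨hi1, hi2, hi3, ?_⟩
  rw [hi1] at hSΛ
  field_simp
  linarith
end

section
/- Suppose E₁ : [0,∞) → [0,∞) is a nonnegative bounded measurable function, positive on a set of positive measure, and u ∈ L¹(0,∞) is nonnegative, such that E₁(t) ≥ K ∫₀^t u(τ)E₁(t−τ)dτ for all t ≥ 0, where K > 0. Then, for every λ > 0, K ∫₀^∞ u(τ)e^{−λτ}dτ ≤ 1, and letting λ → 0⁺, K ∫₀^∞ u(τ)dτ ≤ 1. -/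
/-!
Weight the renewal inequality by `e^{-λt}`: since `e^{-λt} = e^{-λτ} e^{-λ(t-τ)}`, the weighted
inequality reads `K (g ⋆ h) ≤ h` with `g = u e^{-λ·}` and `h = E₁ e^{-λ·}`, both integrable on
`(0, ∞)`. Integrating over `(0, ∞)` turns the convolution into a product, `K û(λ) ∫ h ≤ ∫ h`, and
`∫ h > 0` because `E₁` is positive on a set of positive measure. Dominated convergence then lets
`λ → 0⁺`.
-/

open MeasureTheory Set Real Filter Topology

noncomputable def laplaceTransform (u : ℝ → ℝ) (l : ℝ) : ℝ :=
  ∫ τ in Ioi 0, u τ * exp (-l * τ)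

lemma norm_exp_neg_mul_le_one {l τ : ℝ} (hl : 0 ≤ l) (hτ : 0 ≤ τ) : ‖exp (-l * τ)‖ ≤ 1 := by
  rw [norm_of_nonneg (exp_pos _).le, exp_le_one_iff]
  nlinarith

lemma MeasureTheory.IntegrableOn.mul_exp_neg {u : ℝ → ℝ} (hu : IntegrableOn u (Ioi 0)) {l : ℝ}
    (hl : 0 ≤ l) : IntegrableOn (fun τ => u τ * exp (-l * τ)) (Ioi 0) := by
  have hexp : Measurable fun τ : ℝ => exp (-l * τ) := by fun_prop
  refine hu.mul_bdd (c := 1) hexp.aestronglyMeasurable ?_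
  filter_upwards [ae_restrict_mem measurableSet_Ioi] with τ hτ
  exact norm_exp_neg_mul_le_one hl (le_of_lt hτ)

lemma integrableOn_mul_exp_neg_of_bdd {f : ℝ → ℝ} (hf : AEStronglyMeasurable f) {M : ℝ}
    (hfM : ∀ t, ‖f t‖ ≤ M) {l : ℝ} (hl : 0 < l) :
    IntegrableOn (fun s => f s * exp (-l * s)) (Ioi 0) :=
  (exp_neg_integrableOn_Ioi 0 hl).bdd_mul hf.restrict (ae_of_all _ hfM)

lemma intervalIntegral_mul_exp_neg_mul_mul_exp_neg (u E : ℝ → ℝ) (l x : ℝ) :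
    ∫ t in 0..x, u t * exp (-l * t) * (E (x - t) * exp (-l * (x - t))) =
      exp (-l * x) * ∫ t in 0..x, u t * E (x - t) := by
  rw [← intervalIntegral.integral_const_mul]
  refine intervalIntegral.integral_congr fun t _ => ?_
  have hexp : exp (-l * t) * exp (-l * (x - t)) = exp (-l * x) := by
    rw [← exp_add]; ring_nf
  rw [← hexp]
  ring

lemma setIntegral_mul_exp_neg_pos {E : ℝ → ℝ} (hE0 : ∀ t, 0 ≤ E t) {l : ℝ}
    (hh : IntegrableOn (fun s => E s * exp (-l * s)) (Ioi 0))
    (hpos : 0 < volume.restrict (Ioi 0) {t | 0 < E t}) :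
    0 < ∫ s in Ioi 0, E s * exp (-l * s) := by
  rw [integral_pos_iff_support_of_nonneg_ae
    (ae_of_all _ fun s => mul_nonneg (hE0 s) (exp_pos _).le) hh]
  refine hpos.trans_le (measure_mono fun t (ht : 0 < E t) => ?_)
  simp only [Function.mem_support]
  positivity

lemma mul_setIntegral_le_one_of_mul_conv_le {g h : ℝ → ℝ} (hg : IntegrableOn g (Ioi 0))
    (hh : IntegrableOn h (Ioi 0)) (hh_pos : 0 < ∫ x in Ioi 0, h x) (K : ℝ)
    (hconv : ∀ x ∈ Ioi (0 : ℝ), K * ∫ t in 0..x, g t * h (x - t) ≤ h x) :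
    K * ∫ x in Ioi 0, g x ≤ 1 := by
  have hconv_int : IntegrableOn (fun x => ∫ t in 0..x, g t * h (x - t)) (Ioi 0) := by
    refine ((integrable_posConvolution hg hh (ContinuousLinearMap.mul ℝ ℝ)).integrableOn).congr_fun
      (fun x hx => ?_) measurableSet_Ioi
    simp [posConvolution, indicator_of_mem hx]
  have hprod : ∫ x in Ioi 0, ∫ t in 0..x, g t * h (x - t) =
      (∫ x in Ioi 0, g x) * ∫ x in Ioi 0, h x :=
    integral_posConvolution hg hh (ContinuousLinearMap.mul ℝ ℝ)
  have hintegrated : K * ((∫ x in Ioi 0, g x) * ∫ x in Ioi 0, h x) ≤ ∫ x in Ioi 0, h x := by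
    rw [← hprod, ← integral_const_mul]
    exact setIntegral_mono_on (hconv_int.const_mul K) hh measurableSet_Ioi hconv
  rw [← mul_assoc] at hintegrated
  exact le_of_mul_le_mul_right (by rwa [one_mul]) hh_pos

lemma mul_laplaceTransform_le_one_of_renewal {E u : ℝ → ℝ} {K M : ℝ} (hEm : Measurable E)
    (hE0 : ∀ t, 0 ≤ E t) (hEb : ∀ t, E t ≤ M)
    (hEpos : 0 < volume.restrict (Ioi 0) {t | 0 < E t}) (hu : IntegrableOn u (Ioi 0))
    (hrenewal : ∀ t, 0 ≤ t → K * (∫ τ in 0..t, u τ * E (t - τ)) ≤ E t) {l : ℝ} (hl : 0 < l) :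
    K * laplaceTransform u l ≤ 1 := by
  have hh : IntegrableOn (fun s => E s * exp (-l * s)) (Ioi 0) :=
    integrableOn_mul_exp_neg_of_bdd hEm.aestronglyMeasurable
      (fun t => (norm_of_nonneg (hE0 t)).trans_le (hEb t)) hl
  refine mul_setIntegral_le_one_of_mul_conv_le (hu.mul_exp_neg hl.le) hh
    (setIntegral_mul_exp_neg_pos hE0 hh hEpos) K fun x hx => ?_
  rw [intervalIntegral_mul_exp_neg_mul_mul_exp_neg, mul_left_comm, mul_comm (E x)]
  exact mul_le_mul_of_nonneg_left (hrenewal x (le_of_lt hx)) (exp_pos _).le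

lemma tendsto_laplaceTransform_nhdsGT_zero {u : ℝ → ℝ} (hu : IntegrableOn u (Ioi 0)) :
    Tendsto (laplaceTransform u) (𝓝[>] 0) (𝓝 (∫ τ in Ioi 0, u τ)) := by
  refine tendsto_integral_filter_of_dominated_convergence (fun τ => ‖u τ‖) ?_ ?_ hu.norm ?_
  · filter_upwards [self_mem_nhdsWithin] with l (hl : 0 < l)
    exact (hu.mul_exp_neg hl.le).aestronglyMeasurable
  · filter_upwards [self_mem_nhdsWithin] with l (hl : 0 < l)
    filter_upwards [ae_restrict_mem measurableSet_Ioi] with τ (hτ : 0 < τ)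
    rw [norm_mul]
    exact mul_le_of_le_one_right (norm_nonneg _) (norm_exp_neg_mul_le_one hl.le hτ.le)
  · refine ae_of_all _ fun τ => ?_
    have hcont : Continuous fun l : ℝ => u τ * exp (-l * τ) := by fun_prop
    simpa using (hcont.tendsto 0).mono_left nhdsWithin_le_nhds

theorem renewal_laplace_bound_general
    (E₁ u : ℝ → ℝ) (K : ℝ)
    (hE₁m : Measurable E₁) (hE₁0 : ∀ t, 0 ≤ E₁ t)
    (M : ℝ) (hE₁b : ∀ t, E₁ t ≤ M)
    (hE₁pos : 0 < (volume.restrict (Ioi (0:ℝ))) {t | 0 < E₁ t})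
    (huint : IntegrableOn u (Ioi 0))
    (hrenewal : ∀ t, 0 ≤ t → K * (∫ τ in (0:ℝ)..t, u τ * E₁ (t - τ)) ≤ E₁ t) :
    (∀ l : ℝ, 0 < l → K * (∫ τ in Ioi (0:ℝ), u τ * Real.exp (-l * τ)) ≤ 1) ∧
    K * (∫ τ in Ioi (0:ℝ), u τ) ≤ 1 := by
  have hlaplace : ∀ l : ℝ, 0 < l → K * laplaceTransform u l ≤ 1 := fun _ hl =>
    mul_laplaceTransform_le_one_of_renewal hE₁m hE₁0 hE₁b hE₁pos huint hrenewal hl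
  exact ⟨hlaplace, le_of_tendsto ((tendsto_laplaceTransform_nhdsGT_zero huint).const_mul K)
    (eventually_mem_nhdsWithin.mono hlaplace)⟩

/-- Laplace transform argument for the renewal inequality `E₁ ≥ K (u * E₁)`:
if `E₁` is nonnegative, bounded, measurable and positive on a set of positive measure,
and `u` is nonnegative integrable, then `K ∫₀^∞ u(τ)e^{-λτ}dτ ≤ 1` for every `λ > 0`,
and `K ∫₀^∞ u ≤ 1`. -/
theorem renewal_laplace_bound
    (E₁ u : ℝ → ℝ) (K : ℝ) (hK : 0 < K)
    (hE₁m : Measurable E₁) (hE₁0 : ∀ t, 0 ≤ E₁ t)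
    (M : ℝ) (hE₁b : ∀ t, E₁ t ≤ M)
    (hE₁pos : 0 < (volume.restrict (Ioi (0:ℝ))) {t | 0 < E₁ t})
    (hu0 : ∀ τ, 0 ≤ u τ) (huint : IntegrableOn u (Ioi 0))
    (hrenewal : ∀ t, 0 ≤ t → K * (∫ τ in (0:ℝ)..t, u τ * E₁ (t - τ)) ≤ E₁ t) :
    (∀ l : ℝ, 0 < l → K * (∫ τ in Ioi (0:ℝ), u τ * Real.exp (-l * τ)) ≤ 1) ∧
    K * (∫ τ in Ioi (0:ℝ), u τ) ≤ 1 :=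
  renewal_laplace_bound_general E₁ u K hE₁m hE₁0 M hE₁b hE₁pos huint hrenewal
end
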